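/- Let n ≡ 1 (mod 3), n ≥ 6, and let T be a tree on n vertices not isomorphic to K_{1,n-1}. Then every restrictive edge-colouring of K_{n+1} by Z_3 admits a zero-sum embedding of T. -/

import Mathlib

/-!
Call `w` an exception of `v` if `c s(v, w)` differs from the majority colour `a v` at `v`;
restrictiveness says that every vertex has at most one exception. Every edge between two vertices
of different majority colours is an exception at one of its ends, so two majority classes of sizes
`k` and `m` satisfy `k * m ≤ k + m`. With `n + 1 ≥ 7` vertices and three colours some class has at
least three members, and hence all but at most one vertex share one majority colour `x`. If all of
them do, the colour-`x` graph has minimum degree `n - 1` and the tree embeds into it greedily, leaf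
by leaf; otherwise the `n` vertices of colour `x` span a clique of colour `x`. Either way `T` is
embedded monochromatically, and its `n - 1 ≡ 0 (mod 3)` edges sum to `0`.
-/

open SimpleGraph Finset

namespace SimpleGraph

variable {V W : Type*} {G : SimpleGraph W}

theorem exists_adj_notMem_of_card_le_degree [Fintype W] [DecidableEq W] [DecidableRel G.Adj]
    {s : Finset W} {w : W} (hw : w ∈ s) (hs : #s ≤ G.degree w) :
    ∃ w', G.Adj w w' ∧ w' ∉ s := by
  by_contra! h
  have hsub : G.neighborFinset w ⊆ s.erase w := fun w' hw' =>
    mem_erase.2 ⟨(G.ne_of_adj ((G.mem_neighborFinset w w').1 hw')).symm,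
      h w' ((G.mem_neighborFinset w w').1 hw')⟩
  have := card_le_card hsub
  rw [card_neighborFinset_eq_degree, card_erase_of_mem hw] at this
  have : 0 < #s := card_pos.2 ⟨w, hw⟩
  omega

theorem IsTree.isContained_of_le_degree [Fintype V] [Fintype W] [Nonempty W]
    [DecidableRel G.Adj] {T : SimpleGraph V} (hT : T.IsTree)
    (hdeg : ∀ w, Fintype.card V - 1 ≤ G.degree w) : T ⊑ G := by
  classical
  obtain ⟨k, hk⟩ : ∃ k, Fintype.card V = k + 1 :=
    Nat.exists_eq_succ_of_ne_zero (Fintype.card_pos_iff.2 hT.connected.nonempty).ne'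
  induction k generalizing V with
  | zero =>
    have : Subsingleton V := Fintype.card_le_one_iff_subsingleton.mp hk.le
    obtain ⟨w⟩ := ‹Nonempty W›
    exact ⟨⟨⟨fun _ => w, fun h => (h.ne (Subsingleton.elim _ _)).elim⟩,
      fun _ _ _ => Subsingleton.elim _ _⟩⟩
  | succ k ih =>
    have : Nontrivial V := Fintype.one_lt_card_iff_nontrivial.mp (by omega)
    obtain ⟨l, hl⟩ := hT.exists_vert_degree_one_of_nontrivial
    obtain ⟨p, hlp, hp⟩ := degree_eq_one_iff_existsUnique_adj.mp hl
    have hpl : p ≠ l := hlp.ne.symm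
    have hcard : Fintype.card ({l}ᶜ : Set V) = k + 1 := by
      rw [Fintype.card_compl_set]; simp [hk]
    obtain ⟨f⟩ := ih (T := T.induce {l}ᶜ)
      ⟨hT.connected.induce_compl_singleton_of_degree_eq_one hl, hT.isAcyclic.induce _⟩
      (fun w => by have := hdeg w; omega) hcard
    obtain ⟨w, hw, hwf⟩ := exists_adj_notMem_of_card_le_degree (G := G)
      (mem_image_of_mem f (mem_univ ⟨p, hpl⟩))
      (card_image_le.trans (by have := hdeg (f ⟨p, hpl⟩); simp only [card_univ, hcard]; omega))
    have hwf' : ∀ x, w ≠ f x := fun x h => hwf (h ▸ mem_image_of_mem f (mem_univ x))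
    let g : V → W := fun x => if h : x = l then w else f ⟨x, h⟩
    have hgl : g l = w := dif_pos rfl
    have hg : ∀ x (hx : x ≠ l), g x = f ⟨x, hx⟩ := fun x hx => dif_neg hx
    have hgp : G.Adj (g l) (g p) := by rw [hgl, hg p hpl]; exact hw.symm
    refine ⟨⟨⟨g, fun {x y} hxy => ?_⟩, fun x y (hxy : g x = g y) => ?_⟩⟩
    · by_cases hx : x = l <;> by_cases hy : y = l
      · exact (hxy.ne (hx.trans hy.symm)).elim
      · subst hx; rwa [hp y hxy]
      · subst hy; rw [hp x hxy.symm]; exact hgp.symm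
      · rw [hg x hx, hg y hy]
        exact f.toHom.map_adj (show (T.induce {l}ᶜ).Adj ⟨x, hx⟩ ⟨y, hy⟩ from hxy)
    · by_cases hx : x = l <;> by_cases hy : y = l
      · exact hx.trans hy.symm
      · rw [hx, hgl, hg y hy] at hxy; exact (hwf' _ hxy).elim
      · rw [hy, hgl, hg x hx] at hxy; exact (hwf' _ hxy.symm).elim
      · rw [hg x hx, hg y hy] at hxy; exact congrArg Subtype.val (f.injective hxy)

theorem IsTree.sum_edgeFinset_map_eq_nsmul {I K : Type*} [Fintype V] [DecidableEq V]
    [AddCommMonoid K] {T : SimpleGraph V} [DecidableRel T.Adj] (hT : T.IsTree)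
    {c : Sym2 I → K} {x : K} (f : V → I) (hf : ∀ u v, T.Adj u v → c s(f u, f v) = x) :
    ∑ e ∈ T.edgeFinset, c (e.map f) = (Fintype.card V - 1) • x := by
  rw [sum_congr rfl (g := fun _ => x), sum_const, ← hT.card_edgeFinset, Nat.add_sub_cancel]
  intro e he
  induction e using Sym2.ind with
  | _ u v => rw [Sym2.map_mk]; exact hf u v (mem_edgeFinset.mp he)

end SimpleGraph

def IsRestrictiveWith {I K : Type*} (c : Sym2 I → K) (a : I → K) : Prop :=
  ∀ v, {w | w ≠ v ∧ c s(v, w) ≠ a v}.Subsingleton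

namespace IsRestrictiveWith

variable {I K : Type*} {c : Sym2 I → K} {a : I → K}

theorem of_card_le [Fintype I] [DecidableEq I] [DecidableEq K]
    (h : ∀ v, Fintype.card I ≤ #{w | w ≠ v ∧ c s(v, w) = a v} + 2) :
    IsRestrictiveWith c a := by
  intro v q hq r hr
  have hsplit := card_filter_add_card_filter_not (s := {w | w ≠ v}) (fun w => c s(v, w) = a v)
  rw [filter_filter, filter_filter, filter_ne', card_erase_of_mem (mem_univ v), card_univ]
    at hsplit
  have hle : #{w | w ≠ v ∧ ¬c s(v, w) = a v} ≤ 1 := by have := h v; omega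
  exact card_le_one.1 hle q (by simpa using hq) r (by simpa using hr)

theorem card_mul_card_le_card_add_card [DecidableEq I] [DecidableEq K]
    (hc : IsRestrictiveWith c a) {A B : Finset I} (hAB : ∀ u ∈ A, ∀ w ∈ B, a u ≠ a w) :
    #A * #B ≤ #A + #B := by
  let IsException : I × I → Prop := fun p => p.2 ≠ p.1 ∧ c s(p.1, p.2) ≠ a p.1
  have hcover : A ×ˢ B ⊆
      {p ∈ A ×ˢ B | IsException p} ∪ {p ∈ A ×ˢ B | IsException p.swap} := by
    rintro ⟨u, w⟩ huw
    obtain ⟨hu, hw⟩ := mem_product.1 huw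
    have hne := hAB u hu w hw
    have huw' : u ≠ w := fun h => hne (h ▸ rfl)
    by_cases hcu : c s(u, w) = a u
    · refine mem_union_right _ (mem_filter.2 ⟨huw, huw', ?_⟩)
      rw [Prod.snd_swap, Prod.fst_swap, Sym2.eq_swap, hcu]; exact hne
    · exact mem_union_left _ (mem_filter.2 ⟨huw, huw'.symm, hcu⟩)
  have hfst : #{p ∈ A ×ˢ B | IsException p} ≤ #A :=
    card_le_card_of_injOn Prod.fst (fun p hp => (mem_product.1 (mem_filter.1 hp).1).1)
      fun p hp q hq h => Prod.ext h (hc p.1 (mem_filter.1 hp).2 (h ▸ (mem_filter.1 hq).2))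
  have hsnd : #{p ∈ A ×ˢ B | IsException p.swap} ≤ #B :=
    card_le_card_of_injOn Prod.snd (fun p hp => (mem_product.1 (mem_filter.1 hp).1).2)
      fun p hp q hq h => Prod.ext (hc p.2 (mem_filter.1 hp).2 (h ▸ (mem_filter.1 hq).2)) h
  calc #A * #B = #(A ×ˢ B) := (card_product A B).symm
    _ ≤ _ := (card_le_card hcover).trans (card_union_le _ _)
    _ ≤ #A + #B := add_le_add hfst hsnd

theorem exists_card_ne_le_one [Fintype I] [DecidableEq I] [Fintype K] [DecidableEq K]
    (hc : IsRestrictiveWith c a) (hcard : 2 * Fintype.card K < Fintype.card I) :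
    ∃ x, #{v | a v ≠ x} ≤ 1 := by
  obtain ⟨x, hx⟩ := Fintype.exists_lt_card_fiber_of_mul_lt_card a (n := 2) (by omega)
  refine ⟨x, ?_⟩
  have := hc.card_mul_card_le_card_add_card (A := {v | a v = x}) (B := {v | a v ≠ x})
    (by simp only [mem_filter, mem_univ, true_and]; rintro u rfl w hw; exact Ne.symm hw)
  by_contra! h
  nlinarith

theorem colour_eq_of_unique_deviant (hc : IsRestrictiveWith c a) {v₀ : I} {x : K}
    (hv₀ : a v₀ ≠ x) (ha : ∀ v, v ≠ v₀ → a v = x) {v w : I} (hvw : v ≠ w) (hv : v ≠ v₀)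
    (hw : w ≠ v₀) : c s(v, w) = x := by
  by_contra h
  -- `v` and `w` would be each other's exception, so both would be exceptions of `v₀`.
  have hv₀v : c s(v, v₀) = x := by
    by_contra h'
    exact hw (hc v ⟨hvw.symm, ha v hv ▸ h⟩ ⟨hv.symm, ha v hv ▸ h'⟩)
  have hv₀w : c s(w, v₀) = x := by
    by_contra h'
    exact hv (hc w ⟨hvw, ha w hw ▸ Sym2.eq_swap (a := v) ▸ h⟩ ⟨hw.symm, ha w hw ▸ h'⟩)
  exact hvw <| hc v₀ ⟨hv, by rwa [Sym2.eq_swap, hv₀v, ne_comm]⟩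
    ⟨hw, by rwa [Sym2.eq_swap, hv₀w, ne_comm]⟩

theorem exists_embedding_forall_adj_colour_eq [Fintype I] [DecidableEq I] [Fintype K]
    [DecidableEq K] {V : Type*} [Fintype V] {T : SimpleGraph V} (hT : T.IsTree)
    (hc : IsRestrictiveWith c a) (hVI : Fintype.card I = Fintype.card V + 1)
    (hK : 2 * Fintype.card K < Fintype.card I)
    (hdom : ∀ v, Fintype.card V - 1 ≤ #{w | w ≠ v ∧ c s(v, w) = a v}) :
    ∃ (f : V ↪ I) (x : K), ∀ u v, T.Adj u v → c s(f u, f v) = x := by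
  obtain ⟨x, hx⟩ := hc.exists_card_ne_le_one hK
  by_cases hdev : ∃ v₀, a v₀ ≠ x
  · obtain ⟨v₀, hv₀⟩ := hdev
    have ha : ∀ v, v ≠ v₀ → a v = x := fun v hv => by
      by_contra h
      exact hv (card_le_one.1 hx v (by simpa using h) v₀ (by simpa using hv₀))
    have e : V ≃ {v // v ≠ v₀} := Fintype.equivOfCardEq (by simp [hVI])
    refine ⟨e.toEmbedding.trans (Function.Embedding.subtype _), x, fun u v huv => ?_⟩
    exact hc.colour_eq_of_unique_deviant hv₀ ha
      (fun h => huv.ne (e.injective (Subtype.ext h))) (e u).2 (e v).2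
  · push Not at hdev
    classical
    let G := fromEdgeSet (c ⁻¹' {x})
    have : Nonempty I := Fintype.card_pos_iff.1 (by omega)
    have hdeg : ∀ v, Fintype.card V - 1 ≤ G.degree v := fun v => by
      rw [← card_neighborFinset_eq_degree, neighborFinset_eq_filter]
      convert hdom v using 2
      ext w
      simp [G, hdev v, and_comm, eq_comm]
    obtain ⟨f⟩ := hT.isContained_of_le_degree hdeg
    exact ⟨f.toEmbedding, x, fun u v huv => (f.toHom.map_adj huv).1⟩

end IsRestrictiveWith

theorem stmt_13_general {V : Type} [Fintype V] [DecidableEq V] {n : ℕ}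
    (hV : Fintype.card V = n) (hn1 : n % 3 = 1) (hn : 6 ≤ n)
    (T : SimpleGraph V) [DecidableRel T.Adj]
    (hconn : T.Connected) (hacyc : T.IsAcyclic)
    (c : Sym2 (Fin (n + 1)) → ZMod 3)
    (hres : ∀ v : Fin (n + 1), ∃ a : ZMod 3,
      n - 1 ≤ (univ.filter fun w => w ≠ v ∧ c s(v, w) = a).card) :
    ∃ f : V ↪ Fin (n + 1), ∑ e ∈ T.edgeFinset, c (e.map f) = 0 := by
  choose a ha using hres
  have hT : T.IsTree := ⟨hconn, hacyc⟩
  have hc : IsRestrictiveWith c a :=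
    .of_card_le fun v => by have := ha v; simp only [Fintype.card_fin]; omega
  obtain ⟨f, x, hf⟩ := hc.exists_embedding_forall_adj_colour_eq hT (by simp [hV])
    (by simp; omega) (by simpa [hV] using ha)
  refine ⟨f, ?_⟩
  have h3 : ((n - 1 : ℕ) : ZMod 3) = 0 := (ZMod.natCast_eq_zero_iff _ _).2 (by omega)
  rw [hT.sum_edgeFinset_map_eq_nsmul f hf, hV, nsmul_eq_mul, h3, zero_mul]

theorem stmt_13 {V : Type} [Fintype V] [DecidableEq V] {n : ℕ}
    (hV : Fintype.card V = n) (hn1 : n % 3 = 1) (hn : 6 ≤ n)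
    (T : SimpleGraph V) [DecidableRel T.Adj]
    (hconn : T.Connected) (hacyc : T.IsAcyclic)
    (hstar : ¬ Nonempty (T ≃g completeBipartiteGraph (Fin 1) (Fin (n - 1))))
    (c : Sym2 (Fin (n + 1)) → ZMod 3)
    (hres : ∀ v : Fin (n + 1), ∃ a : ZMod 3,
      n - 1 ≤ (univ.filter fun w => w ≠ v ∧ c s(v, w) = a).card) :
    ∃ f : V ↪ Fin (n + 1), ∑ e ∈ T.edgeFinset, c (e.map f) = 0 :=
  stmt_13_general hV hn1 hn T hconn hacyc c hres
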